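/- For every partition π of [0,1] into k intervals with diam π ≤ 1/4, there exists a permutation π' of π such that for h = 1, 2, the number N_h of right endpoints of intervals of π' lying in I_h^1 = [(h−1)/2, h/2] satisfies k/2 − 1 ≤ N_h ≤ k/2 + 1. -/

import Mathlib

open MeasureTheory Filter

/-- A partition of `[0,1]` into `k` closed intervals, determined by points
`0 = t 0 < t 1 < ⋯ < t k = 1`. -/
structure UnitPartition where
  k : ℕ
  k_pos : 0 < k
  t : ℕ → ℝ
  t_zero : t 0 = 0
  t_last : t k = 1
  mono : ∀ i < k, t i < t (i + 1)

namespace UnitPartition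

/-- The length of the `i`-th interval (`0`-indexed). -/
def length (π : UnitPartition) (i : ℕ) : ℝ := π.t (i + 1) - π.t i

/-- The diameter of a partition: the maximal length of its intervals. -/
noncomputable def diam (π : UnitPartition) : ℝ :=
  (Finset.range π.k).sup' (Finset.nonempty_range_iff.mpr π.k_pos.ne') π.length

end UnitPartition

/-- A sequence of partitions is uniformly distributed if for every continuous `f` on `[0,1]`,
`(1/k(n)) ∑_{i=1}^{k(n)} f(tᵢⁿ) → ∫₀¹ f`. -/
def IsUD (π : ℕ → UnitPartition) : Prop :=
  ∀ f : ℝ → ℝ, ContinuousOn f (Set.Icc 0 1) →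
    Tendsto (fun n => (∑ i ∈ Finset.range (π n).k, f ((π n).t (i + 1))) / ((π n).k : ℝ))
      atTop (nhds (∫ x in (0:ℝ)..1, f x))

/-- `π'` is a permutation of `π`: it has the same number of intervals, and its list of
interval lengths is a rearrangement of that of `π`. -/
def IsPermutationOf (π' π : UnitPartition) : Prop :=
  π'.k = π.k ∧ ∃ e : Equiv.Perm (Fin π.k), ∀ i : Fin π.k, π'.length i = π.length (e i)


/-!
Take the cyclic rotations of `π`: rotating by `j` lists the intervals starting from the `j`-th
one and wrapping around. Summed over all `k` rotations, the `n`-th right endpoint adds up to `n`,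
so with `2n < k ≤ 2n + 2` some rotation has its `n`-th endpoint below `1/2`, while not all of
them can have their `(n+1)`-st endpoint below `1/2`. Since the `(n+1)`-st endpoint of the
rotation by `j` dominates the `n`-th endpoint of the rotation by `j + 1`, walking around the
circle yields a rotation whose `n`-th endpoint is `< 1/2` and whose `(n+1)`-st is `≥ 1/2`;
it has `n` or `n + 1` right endpoints in `[0, 1/2]` and exactly `k - n` in `[1/2, 1]`.
-/

open Finset

namespace Function.Periodic

variable {f : ℕ → ℝ} {k : ℕ}

theorem sum_range_add (hf : Periodic f k) (i : ℕ) :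
    ∑ j ∈ range k, f (j + i) = ∑ j ∈ range k, f j := by
  induction i with
  | zero => rfl
  | succ i ih =>
    have hlast := sum_range_succ (fun j => f (j + i)) k
    have hfirst := sum_range_succ' (fun j => f (j + i)) k
    have hwrap : f (k + i) = f (0 + i) := by rw [add_comm k, hf, zero_add]
    rw [← ih]
    calc ∑ j ∈ range k, f (j + (i + 1)) = ∑ j ∈ range k, f (j + 1 + i) := by
          simp only [add_assoc, add_comm 1 i]
      _ = ∑ j ∈ range k, f (j + i) := by linarith

theorem sum_range_window_sum (hf : Periodic f k) (h : ℕ) :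
    ∑ j ∈ range k, ∑ i ∈ range h, f (j + i) = h * ∑ j ∈ range k, f j := by
  rw [sum_comm]
  simp [hf.sum_range_add]

theorem window_sum_periodic (hf : Periodic f k) (h : ℕ) :
    Periodic (fun j => ∑ i ∈ range h, f (j + i)) k := fun j =>
  sum_congr rfl fun i _ => by rw [add_right_comm, hf]

theorem exists_window_sum_crossing (hf : Periodic f k) (hf0 : ∀ i, 0 ≤ f i) {n : ℕ} {a : ℝ}
    (hlt : n * ∑ j ∈ range k, f j < k * a) (hge : k * a ≤ (n + 1) * ∑ j ∈ range k, f j) :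
    ∃ j, ∑ i ∈ range n, f (j + i) < a ∧ a ≤ ∑ i ∈ range (n + 1), f (j + i) := by
  by_contra! hnone
  have step : ∀ j, ∑ i ∈ range n, f (j + i) < a → ∑ i ∈ range n, f (j + 1 + i) < a := by
    intro j hj
    have hsplit := sum_range_succ' (fun i => f (j + i)) n
    simp only [add_zero, ← add_assoc, add_right_comm j _ 1] at hsplit
    linarith [hnone j hj, hf0 j]
  obtain ⟨j₀, -, hj₀⟩ : ∃ j ∈ range k, ∑ i ∈ range n, f (j + i) < a := by
    apply exists_lt_of_sum_lt
    rwa [hf.sum_range_window_sum, sum_const, card_range, nsmul_eq_mul]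
  have below : ∀ m, ∑ i ∈ range n, f (j₀ + m + i) < a := by
    intro m
    induction m with
    | zero => simpa using hj₀
    | succ m ih => simpa [add_assoc] using step _ ih
  have htotal := (hf.window_sum_periodic (n + 1)).sum_range_add j₀
  rw [hf.sum_range_window_sum] at htotal
  have : ∑ m ∈ range k, ∑ i ∈ range (n + 1), f (m + j₀ + i) < ∑ _m ∈ range k, a :=
    sum_lt_sum_of_nonempty (nonempty_range_iff.mpr (by rintro rfl; simp at hlt))
      fun m _ => hnone _ (by simpa [add_comm m] using below m)
  rw [sum_const, card_range, nsmul_eq_mul] at this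
  push_cast at htotal
  linarith

end Function.Periodic

theorem card_filter_Icc_zero_half {s : ℕ → ℝ} (hs : StrictMono s) (h0 : s 0 = 0) {k n : ℕ}
    (hn : n ≤ k) (hlt : s n < 1 / 2) (hge : 1 / 2 ≤ s (n + 1)) :
    n ≤ #{i ∈ range k | s (i + 1) ∈ Set.Icc 0 (1 / 2)} ∧
      #{i ∈ range k | s (i + 1) ∈ Set.Icc 0 (1 / 2)} ≤ n + 1 := by
  constructor
  · refine (card_range n).symm.le.trans (card_le_card fun i hi => ?_)
    rw [mem_range] at hi
    have hpos : s 0 < s (i + 1) := hs (Nat.succ_pos i)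
    have hbelow : s (i + 1) ≤ s n := hs.monotone hi
    simp only [mem_filter, mem_range, Set.mem_Icc]
    exact ⟨by omega, by linarith, by linarith⟩
  · refine (card_le_card fun i hi => ?_).trans (card_range (n + 1)).le
    simp only [mem_filter, mem_range, Set.mem_Icc] at hi ⊢
    by_contra! hin
    have : s (n + 1) < s (i + 1) := hs (by omega)
    linarith [hi.2.2]

theorem card_filter_Icc_half_one {s : ℕ → ℝ} (hs : StrictMono s) {k n : ℕ} (h1 : s k = 1)
    (hlt : s n < 1 / 2) (hge : 1 / 2 ≤ s (n + 1)) :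
    #{i ∈ range k | s (i + 1) ∈ Set.Icc (1 / 2) 1} = k - n := by
  rw [← Nat.card_Ico n k]
  congr 1
  ext i
  simp only [mem_filter, mem_range, Set.mem_Icc, mem_Ico]
  constructor
  · rintro ⟨hik, hhalf, -⟩
    by_contra! hin
    have : s (i + 1) ≤ s n := hs.monotone (by omega)
    linarith
  · rintro ⟨hni, hik⟩
    have : s (n + 1) ≤ s (i + 1) := hs.monotone (by omega)
    have : s (i + 1) ≤ s k := hs.monotone hik
    exact ⟨hik, by linarith, by linarith⟩

theorem div_two_sub_one_le_and_le_div_two_add_one {k N : ℕ} (hlo : k ≤ 2 * N + 2)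
    (hhi : 2 * N ≤ k + 2) : (k : ℝ) / 2 - 1 ≤ N ∧ (N : ℝ) ≤ k / 2 + 1 := by
  have hlo' : (k : ℝ) ≤ 2 * N + 2 := by exact_mod_cast hlo
  have hhi' : 2 * (N : ℝ) ≤ k + 2 := by exact_mod_cast hhi
  constructor <;> linarith

namespace UnitPartition

variable (π : UnitPartition)

theorem length_pos {i : ℕ} (hi : i < π.k) : 0 < π.length i :=
  sub_pos.mpr (π.mono i hi)

theorem sum_length : ∑ i ∈ range π.k, π.length i = 1 := by
  simp only [length, sum_range_sub, π.t_zero, π.t_last, sub_zero]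

theorem length_mod_periodic : Function.Periodic (fun i => π.length (i % π.k)) π.k :=
  fun i => by simp

theorem sum_length_mod : ∑ i ∈ range π.k, π.length (i % π.k) = 1 := by
  rw [← π.sum_length]
  exact sum_congr rfl fun i hi => by rw [Nat.mod_eq_of_lt (mem_range.mp hi)]

noncomputable def rotate (j : ℕ) : UnitPartition where
  k := π.k
  k_pos := π.k_pos
  t h := ∑ i ∈ range h, π.length ((j + i) % π.k)
  t_zero := sum_range_zero _
  t_last := by
    rw [← π.sum_length_mod, ← π.length_mod_periodic.sum_range_add j]
    simp only [add_comm]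
  mono i _ := by
    rw [sum_range_succ]
    linarith [π.length_pos (Nat.mod_lt (j + i) π.k_pos)]

theorem rotate_length (j i : ℕ) : (π.rotate j).length i = π.length ((j + i) % π.k) := by
  show ∑ l ∈ range (i + 1), π.length ((j + l) % π.k) - ∑ l ∈ range i, π.length ((j + l) % π.k) = _
  rw [sum_range_succ, add_sub_cancel_left]

theorem rotate_t_strictMono (j : ℕ) : StrictMono (π.rotate j).t :=
  strictMono_nat_of_lt_succ fun i => sub_pos.mp <| show 0 < (π.rotate j).length i by
    rw [rotate_length]
    exact π.length_pos (Nat.mod_lt _ π.k_pos)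

theorem rotate_isPermutationOf (j : ℕ) : IsPermutationOf (π.rotate j) π := by
  have : NeZero π.k := ⟨π.k_pos.ne'⟩
  refine ⟨rfl, Equiv.addLeft ⟨j % π.k, Nat.mod_lt _ π.k_pos⟩, fun i => ?_⟩
  simp [rotate_length, Fin.val_add]

theorem exists_rotate_t_lt_half_le_t_succ {n : ℕ} (hlo : 2 * n < π.k) (hhi : π.k ≤ 2 * n + 2) :
    ∃ j, (π.rotate j).t n < 1 / 2 ∧ 1 / 2 ≤ (π.rotate j).t (n + 1) := by
  have hlo' : (2 * n : ℝ) < π.k := by exact_mod_cast hlo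
  have hhi' : (π.k : ℝ) ≤ 2 * n + 2 := by exact_mod_cast hhi
  refine π.length_mod_periodic.exists_window_sum_crossing
    (fun i => (π.length_pos (Nat.mod_lt i π.k_pos)).le) ?_ ?_ <;>
  · rw [π.sum_length_mod]
    linarith

end UnitPartition

theorem exists_halving_permutation_general (π : UnitPartition) :
    ∃ π' : UnitPartition, IsPermutationOf π' π ∧ ∀ h : ℕ, 1 ≤ h → h ≤ 2 →
      (π.k : ℝ) / 2 - 1 ≤
          (((Finset.range π'.k).filter
            (fun i => π'.t (i + 1) ∈ Set.Icc (((h : ℝ) - 1) / 2) ((h : ℝ) / 2))).card : ℝ) ∧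
        (((Finset.range π'.k).filter
            (fun i => π'.t (i + 1) ∈ Set.Icc (((h : ℝ) - 1) / 2) ((h : ℝ) / 2))).card : ℝ) ≤
          (π.k : ℝ) / 2 + 1 := by
  set n := (π.k - 1) / 2
  have hn : 2 * n < π.k ∧ π.k ≤ 2 * n + 2 := by have := π.k_pos; omega
  obtain ⟨j, hlt, hge⟩ := π.exists_rotate_t_lt_half_le_t_succ hn.1 hn.2
  have hs := π.rotate_t_strictMono j
  have hk : (π.rotate j).k = π.k := rfl
  refine ⟨π.rotate j, π.rotate_isPermutationOf j, fun h h1 h2 => ?_⟩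
  interval_cases h
  · rw [show (((1 : ℕ) : ℝ) - 1) / 2 = 0 by norm_num, show ((1 : ℕ) : ℝ) / 2 = 1 / 2 by norm_num]
    obtain ⟨hlo, hhi⟩ := card_filter_Icc_zero_half (k := (π.rotate j).k) (n := n) hs
      (π.rotate j).t_zero (by omega) hlt hge
    exact div_two_sub_one_le_and_le_div_two_add_one (by omega) (by omega)
  · rw [show (((2 : ℕ) : ℝ) - 1) / 2 = 1 / 2 by norm_num, show ((2 : ℕ) : ℝ) / 2 = 1 by norm_num,
      card_filter_Icc_half_one (n := n) hs (π.rotate j).t_last hlt hge]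
    exact div_two_sub_one_le_and_le_div_two_add_one (by omega) (by omega)

/-- For every partition `π` of `[0,1]` into `k` intervals with `diam π ≤ 1/4`, there is a
permutation `π'` of `π` such that for `h = 1, 2` the number of right endpoints of `π'` lying
in `I_h^1 = [(h-1)/2, h/2]` is between `k/2 - 1` and `k/2 + 1`. -/
theorem exists_halving_permutation (π : UnitPartition) (hd : π.diam ≤ 1 / 4) :
    ∃ π' : UnitPartition, IsPermutationOf π' π ∧ ∀ h : ℕ, 1 ≤ h → h ≤ 2 →
      (π.k : ℝ) / 2 - 1 ≤
          (((Finset.range π'.k).filter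
            (fun i => π'.t (i + 1) ∈ Set.Icc (((h : ℝ) - 1) / 2) ((h : ℝ) / 2))).card : ℝ) ∧
        (((Finset.range π'.k).filter
            (fun i => π'.t (i + 1) ∈ Set.Icc (((h : ℝ) - 1) / 2) ((h : ℝ) / 2))).card : ℝ) ≤
          (π.k : ℝ) / 2 + 1 :=
  exists_halving_permutation_general π
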